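/- arXiv:2304.12992 — 5 statements merged into one kernel-verified Lean document; each statement's English description precedes it below -/
import Mathlib

section
/- Let A ∈ ℝ^{m×n} have linearly independent columns, let k ≥ 1, and let 𝒜 ∈ ℝ^{(k+1)m×(kn+m)} be the k-commodity constraint matrix built from A. Let x̄ = (x̄₁,…,x̄_{k+1}) and s̄ = (s̄₁,…,s̄_{k+1}) be entrywise positive vectors in ℝ^{(k+1)m} (each block in ℝ^m), and let g = (g₁,…,g_{k+1}) ∈ ℝ^{(k+1)m}. Set D_i = diag(x̄_i/s̄_i) for i = 1,…,k+1, D_Σ = Σ_{i=1}^{k+1} D_i, X̄ = diag(x̄), S̄ = diag(s̄), and let E ∈ ℝ^{kn×kn} be the k×k block matrix whose (i,j) block is (Aᵀ D_i A if i = j, else 0) − Aᵀ D_i D_Σ⁻¹ D_j A. Define w = D_Σ⁻¹ Σ_{i=1}^{k+1} diag(s̄_i)⁻¹ g_i ∈ ℝ^m and (v₁,…,v_k) = E⁻¹ applied to the stacked vector whose i-th block is Aᵀ(diag(s̄_i)⁻¹ g_i − D_i w) for i = 1,…,k. Then the vector 𝒜 (𝒜ᵀ X̄ S̄⁻¹ 𝒜)⁻¹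 𝒜ᵀ S̄⁻¹ g ∈ ℝ^{(k+1)m} has its i-th block equal to w + A v_i − Σ_{j=1}^{k} D_j D_Σ⁻¹ A v_j for i = 1,…,k, and its (k+1)-th block equal to w − Σ_{j=1}^{k} D_j D_Σ⁻¹ A v_j. -/
open Matrix

/-- The `k`-commodity constraint matrix built from `A ∈ ℝ^{m×n}`. -/
def commodityMatrix {m n : ℕ} (k : ℕ) (A : Matrix (Fin m) (Fin n) ℝ) :
    Matrix (Fin (k + 1) × Fin m) ((Fin k × Fin n) ⊕ Fin m) ℝ :=
  Matrix.of fun p q =>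
    match q with
    | Sum.inl (j, v) => if (p.1 : ℕ) = (j : ℕ) then A p.2 v else 0
    | Sum.inr e' => if p.2 = e' then 1 else 0

/-- The `kn × kn` Schur-complement matrix `E` with `(i,j)` block
`(Aᵀ D_i A if i = j, else 0) − Aᵀ D_i D_Σ⁻¹ D_j A`, where `D_i = diag(d_i)` and
`D_Σ = diag(∑ i, d_i)`. -/
noncomputable def schurE {m n : ℕ} (k : ℕ) (A : Matrix (Fin m) (Fin n) ℝ)
    (d : Fin (k + 1) → Fin m → ℝ) : Matrix (Fin k × Fin n) (Fin k × Fin n) ℝ :=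
  Matrix.of fun p q =>
    (if p.1 = q.1 then (Aᵀ * Matrix.diagonal (d p.1.castSucc) * A) p.2 q.2 else 0) -
      (Aᵀ * Matrix.diagonal (d p.1.castSucc) *
        (Matrix.diagonal fun e : Fin m => ∑ i, d i e)⁻¹ *
        Matrix.diagonal (d q.1.castSucc) * A) p.2 q.2

/-! The vector `u = (v, w − ∑ⱼ Dⱼ D_Σ⁻¹ A vⱼ)` is obtained by eliminating the last block of
unknowns (the `Sum.inr` coordinates). The Gram matrix `M = 𝒜ᵀ D 𝒜` sends it to
`(E v, 0) + 𝒜ᵀ D (w, …, w)`, which by the defining equations of `w` and `v` is `𝒜ᵀ S̄⁻¹ g`.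
Since `𝒜` is injective, `M` is positive definite, so `u = M⁻¹ 𝒜ᵀ S̄⁻¹ g` and the blocks of `𝒜 u`
can be read off. The same identity with `w = 0` shows that `E` is injective. -/

theorem inv_diagonal_of_ne_zero {ι K : Type*} [Fintype ι] [DecidableEq ι] [Field K]
    {c : ι → K} (hc : ∀ i, c i ≠ 0) : (diagonal c)⁻¹ = diagonal c⁻¹ := by
  refine inv_eq_right_inv ?_
  rw [diagonal_mul_diagonal, ← diagonal_one]
  exact congrArg diagonal (funext fun i => mul_inv_cancel₀ (hc i))

theorem diagonal_mul_inv_diagonal_mul_mulVec_apply {ι κ K : Type*} [Fintype ι] [DecidableEq ι]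
    [Fintype κ] [Field K] (a : ι → K) {c : ι → K} (hc : ∀ i, c i ≠ 0) (B : Matrix ι κ K)
    (y : κ → K) (i : ι) :
    ((diagonal a * (diagonal c)⁻¹ * B) *ᵥ y) i = a i * (c i)⁻¹ * (B *ᵥ y) i := by
  rw [inv_diagonal_of_ne_zero hc, diagonal_mul_diagonal, ← mulVec_mulVec, mulVec_diagonal]
  rfl

section CommodityMatrix

variable {m n k : ℕ} (A : Matrix (Fin m) (Fin n) ℝ)

local notation "𝒜" => commodityMatrix k A

theorem commodityMatrix_mulVec_castSucc (u : (Fin k × Fin n) ⊕ Fin m → ℝ) (i : Fin k)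
    (e : Fin m) :
    (𝒜 *ᵥ u) (i.castSucc, e) = (A *ᵥ fun v => u (Sum.inl (i, v))) e + u (Sum.inr e) := by
  simp [commodityMatrix, mulVec, dotProduct, Fintype.sum_prod_type, Fin.val_eq_val]

theorem commodityMatrix_mulVec_last (u : (Fin k × Fin n) ⊕ Fin m → ℝ) (e : Fin m) :
    (𝒜 *ᵥ u) (Fin.last k, e) = u (Sum.inr e) := by
  have hlast (j : Fin k) : k ≠ (j : ℕ) := j.is_lt.ne'
  simp [commodityMatrix, mulVec, dotProduct, hlast]

theorem commodityMatrix_transpose_mulVec (y : Fin (k + 1) × Fin m → ℝ) :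
    𝒜ᵀ *ᵥ y = Sum.elim (fun p => (Aᵀ *ᵥ fun e => y (p.1.castSucc, e)) p.2)
      fun e => ∑ i, y (i, e) := by
  have hcast (i : Fin (k + 1)) (j : Fin k) : ((i : ℕ) = j) = (i = j.castSucc) := by
    simp [Fin.ext_iff]
  ext (⟨j, v⟩ | e) <;>
    simp [commodityMatrix, mulVec, dotProduct, Fintype.sum_prod_type, hcast, mul_comm]

theorem commodityMatrix_mulVec_injective (hA : ∀ y : Fin n → ℝ, A *ᵥ y = 0 → y = 0) :
    Function.Injective (𝒜).mulVec := by
  refine (injective_iff_map_eq_zero (𝒜).mulVecLin).2 fun u hu => ?_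
  have hr (e : Fin m) : u (Sum.inr e) = 0 := by
    simpa [commodityMatrix_mulVec_last] using congrFun hu (Fin.last k, e)
  have hl (j : Fin k) : (fun v => u (Sum.inl (j, v))) = 0 :=
    hA _ <| funext fun e => by
      simpa [commodityMatrix_mulVec_castSucc, hr] using congrFun hu (j.castSucc, e)
  ext (⟨j, v⟩ | e)
  · exact congrFun (hl j) v
  · exact hr e

theorem isUnit_commodityGram (hA : ∀ y : Fin n → ℝ, A *ᵥ y = 0 → y = 0)
    {d : Fin (k + 1) × Fin m → ℝ} (hd : ∀ p, 0 < d p) :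
    IsUnit (𝒜ᵀ * diagonal d * 𝒜) := by
  have hpos := (posDef_diagonal_iff.2 hd).conjTranspose_mul_mul_same
    (commodityMatrix_mulVec_injective A hA)
  rw [conjTranspose_eq_transpose_of_trivial] at hpos
  exact hpos.isUnit

theorem schurE_mulVec_apply (d : Fin (k + 1) → Fin m → ℝ) (x : Fin k × Fin n → ℝ) (j : Fin k)
    (v : Fin n) :
    (schurE k A d *ᵥ x) (j, v) =
      (Aᵀ *ᵥ (diagonal (d j.castSucc) *ᵥ ((A *ᵥ fun u => x (j, u)) -
        ∑ l : Fin k, (diagonal (d l.castSucc) * (diagonal fun e => ∑ i, d i e)⁻¹ * A) *ᵥ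
          fun u => x (l, u)))) v := by
  have hblock (l : Fin k) :
      Aᵀ * (diagonal (d j.castSucc) *
          (diagonal (d l.castSucc) * (diagonal fun e => ∑ i, d i e)⁻¹ * A)) =
        Aᵀ * diagonal (d j.castSucc) * (diagonal fun e => ∑ i, d i e)⁻¹ *
          diagonal (d l.castSucc) * A := by
    rw [inv_diagonal, commute_diagonal]
    simp only [Matrix.mul_assoc]
  rw [mulVec_sub, mulVec_sub, mulVec_mulVec, mulVec_mulVec, mulVec_sum, mulVec_sum]
  simp only [mulVec_mulVec, hblock]
  simp [schurE, mulVec, dotProduct, Fintype.sum_prod_type, sub_mul, Finset.sum_sub_distrib,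
    ite_mul, Finset.sum_apply]

noncomputable def commodityLift (d : Fin (k + 1) → Fin m → ℝ) (v : Fin k × Fin n → ℝ)
    (w : Fin m → ℝ) : (Fin k × Fin n) ⊕ Fin m → ℝ :=
  Sum.elim v <| w - ∑ j : Fin k,
    (diagonal (d j.castSucc) * (diagonal fun e => ∑ i, d i e)⁻¹ * A) *ᵥ fun u => v (j, u)

theorem commodityGram_mulVec_commodityLift (d : Fin (k + 1) → Fin m → ℝ)
    (hd : ∀ e, ∑ i, d i e ≠ 0) (v : Fin k × Fin n → ℝ) (w : Fin m → ℝ) :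
    (𝒜ᵀ * diagonal (fun p : Fin (k + 1) × Fin m => d p.1 p.2) * 𝒜) *ᵥ commodityLift A d v w =
      Sum.elim (schurE k A d *ᵥ v) 0 + 𝒜ᵀ *ᵥ fun p => d p.1 p.2 * w p.2 := by
  rw [← mulVec_mulVec, ← mulVec_mulVec, commodityMatrix_transpose_mulVec,
    commodityMatrix_transpose_mulVec]
  ext (⟨j, u⟩ | e)
  · simp only [Sum.elim_inl, Pi.add_apply, schurE_mulVec_apply]
    rw [← Pi.add_apply (Aᵀ *ᵥ _), ← mulVec_add]
    congr 1
    ext e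
    simp only [commodityLift, mulVec_diagonal, commodityMatrix_mulVec_castSucc, Sum.elim_inl,
      Sum.elim_inr, Pi.sub_apply, Finset.sum_apply, Pi.add_apply]
    ring
  · simp only [Sum.elim_inr, Pi.add_apply, Pi.zero_apply, zero_add, mulVec_diagonal,
      ← Finset.sum_mul]
    rw [Fin.sum_univ_castSucc]
    simp only [commodityMatrix_mulVec_castSucc, commodityMatrix_mulVec_last, commodityLift,
      Sum.elim_inl, Sum.elim_inr, Pi.sub_apply, Finset.sum_apply,
      diagonal_mul_inv_diagonal_mul_mulVec_apply _ hd]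
    set a : Fin k → ℝ := fun j => (A *ᵥ fun u => v (j, u)) e
    set s := ∑ i, d i e
    have hpull : ∑ j, d j.castSucc e * s⁻¹ * a j = s⁻¹ * ∑ j, d j.castSucc e * a j := by
      rw [Finset.mul_sum]
      exact Finset.sum_congr rfl fun j _ => by ring
    have hsplit (z : ℝ) :
        ∑ j, d j.castSucc e * (a j + z) =
          ∑ j, d j.castSucc e * a j + (∑ j : Fin k, d j.castSucc e) * z := by
      rw [Finset.sum_mul, ← Finset.sum_add_distrib]
      exact Finset.sum_congr rfl fun j _ => by ring
    have hs : ∑ j : Fin k, d j.castSucc e + d (Fin.last k) e = s :=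
      (Fin.sum_univ_castSucc fun i => d i e).symm
    rw [hpull, hsplit]
    linear_combination (w e - s⁻¹ * ∑ j : Fin k, d j.castSucc e * a j) * hs -
      (∑ j : Fin k, d j.castSucc e * a j) * mul_inv_cancel₀ (hd e)

theorem isUnit_schurE (hA : ∀ y : Fin n → ℝ, A *ᵥ y = 0 → y = 0) {d : Fin (k + 1) → Fin m → ℝ}
    (hd : ∀ i e, 0 < d i e) : IsUnit (schurE k A d) := by
  have hsum (e : Fin m) : ∑ i, d i e ≠ 0 :=
    (Finset.sum_pos (fun i _ => hd i e) Finset.univ_nonempty).ne'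
  refine mulVec_injective_iff_isUnit.1 <|
    (injective_iff_map_eq_zero (schurE k A d).mulVecLin).2 fun x hx => ?_
  have hgram := mulVec_injective_iff_isUnit.2 <|
    isUnit_commodityGram A hA (d := fun p : Fin (k + 1) × Fin m => d p.1 p.2) fun p => hd p.1 p.2
  have hlift : commodityLift A d x 0 = 0 := hgram <| by
    have hx' : schurE k A d *ᵥ x = 0 := hx
    simp [commodityGram_mulVec_commodityLift A d hsum, hx', ← Pi.zero_def]
  exact funext fun p => congrFun hlift (Sum.inl p)

theorem commodityGram_inv_mulVec (hA : ∀ y : Fin n → ℝ, A *ᵥ y = 0 → y = 0)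
    {d : Fin (k + 1) → Fin m → ℝ} (hd : ∀ i e, 0 < d i e) (b : Fin (k + 1) → Fin m → ℝ)
    (w : Fin m → ℝ) (hw : w = (diagonal fun e => ∑ i, d i e)⁻¹ *ᵥ ∑ i, b i)
    (v : Fin k × Fin n → ℝ)
    (hv : v = (schurE k A d)⁻¹ *ᵥ fun p => (Aᵀ *ᵥ (b p.1.castSucc -
      diagonal (d p.1.castSucc) *ᵥ w)) p.2) :
    (𝒜ᵀ * diagonal (fun p : Fin (k + 1) × Fin m => d p.1 p.2) * 𝒜)⁻¹ *ᵥ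
      (𝒜ᵀ *ᵥ fun p => b p.1 p.2) = commodityLift A d v w := by
  have hsum (e : Fin m) : ∑ i, d i e ≠ 0 :=
    (Finset.sum_pos (fun i _ => hd i e) Finset.univ_nonempty).ne'
  have hsum_w (e : Fin m) : (∑ i, d i e) * w e = ∑ i, b i e := by
    rw [hw, inv_diagonal_of_ne_zero hsum, mulVec_diagonal, Pi.inv_apply, ← mul_assoc,
      mul_inv_cancel₀ (hsum e), one_mul, Finset.sum_apply]
  have hEv : schurE k A d *ᵥ v = fun p => (Aᵀ *ᵥ (b p.1.castSucc -
      diagonal (d p.1.castSucc) *ᵥ w)) p.2 := by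
    rw [hv, mulVec_mulVec, mul_nonsing_inv _ ((isUnit_schurE A hA hd).map detMonoidHom),
      one_mulVec]
  have hgram := isUnit_commodityGram A hA (d := fun p : Fin (k + 1) × Fin m => d p.1 p.2)
    fun p => hd p.1 p.2
  have hsolve : (𝒜ᵀ * diagonal (fun p : Fin (k + 1) × Fin m => d p.1 p.2) * 𝒜) *ᵥ
      commodityLift A d v w = 𝒜ᵀ *ᵥ fun p => b p.1 p.2 := by
    rw [commodityGram_mulVec_commodityLift A d hsum, hEv, commodityMatrix_transpose_mulVec,
      commodityMatrix_transpose_mulVec]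
    ext (⟨j, u⟩ | e)
    · simp only [Sum.elim_inl, Pi.add_apply]
      rw [← Pi.add_apply (Aᵀ *ᵥ _), ← mulVec_add]
      congr 1
      ext e
      simp [mulVec_diagonal]
    · simp [← Finset.sum_mul, hsum_w]
  rw [← hsolve, mulVec_mulVec, nonsing_inv_mul _ (hgram.map detMonoidHom), one_mulVec]

end CommodityMatrix

theorem commodity_delta_s_blocks_general {m n k : ℕ}
    (A : Matrix (Fin m) (Fin n) ℝ)
    (hA : ∀ y : Fin n → ℝ, A *ᵥ y = 0 → y = 0)
    (xb sb g : Fin (k + 1) → Fin m → ℝ)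
    (hxb : ∀ i e, 0 < xb i e) (hsb : ∀ i e, 0 < sb i e)
    (w : Fin m → ℝ)
    (hw : w = (Matrix.diagonal fun e : Fin m => ∑ i, xb i e / sb i e)⁻¹ *ᵥ
        ∑ i, (Matrix.diagonal (sb i))⁻¹ *ᵥ g i)
    (v : Fin k × Fin n → ℝ)
    (hv : v = (schurE k A (fun i e => xb i e / sb i e))⁻¹ *ᵥ
        (fun p : Fin k × Fin n =>
          (Aᵀ *ᵥ ((Matrix.diagonal (sb p.1.castSucc))⁻¹ *ᵥ g p.1.castSucc -
            Matrix.diagonal (fun e => xb p.1.castSucc e / sb p.1.castSucc e) *ᵥ w)) p.2))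
    (res : Fin (k + 1) × Fin m → ℝ)
    (hres : res = commodityMatrix k A *ᵥ
        (((commodityMatrix k A)ᵀ *
            (Matrix.diagonal (fun p : Fin (k + 1) × Fin m => xb p.1 p.2) *
              (Matrix.diagonal (fun p : Fin (k + 1) × Fin m => sb p.1 p.2))⁻¹) *
            commodityMatrix k A)⁻¹ *ᵥ
          ((commodityMatrix k A)ᵀ *ᵥ
            ((Matrix.diagonal (fun p : Fin (k + 1) × Fin m => sb p.1 p.2))⁻¹ *ᵥ
              fun p : Fin (k + 1) × Fin m => g p.1 p.2)))) :
    (∀ (i : Fin k) (e : Fin m),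
        res (i.castSucc, e) =
          w e + (A *ᵥ fun vtx => v (i, vtx)) e -
            ∑ j : Fin k,
              ((Matrix.diagonal (fun e' => xb j.castSucc e' / sb j.castSucc e') *
                  (Matrix.diagonal fun e' : Fin m => ∑ i', xb i' e' / sb i' e')⁻¹ * A) *ᵥ
                fun vtx => v (j, vtx)) e) ∧
    (∀ e : Fin m,
        res (Fin.last k, e) =
          w e -
            ∑ j : Fin k,
              ((Matrix.diagonal (fun e' => xb j.castSucc e' / sb j.castSucc e') *
                  (Matrix.diagonal fun e' : Fin m => ∑ i', xb i' e' / sb i' e')⁻¹ * A) *ᵥ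
                fun vtx => v (j, vtx)) e) := by
  have hsb_ne (p : Fin (k + 1) × Fin m) : sb p.1 p.2 ≠ 0 := (hsb p.1 p.2).ne'
  have hS := inv_diagonal_of_ne_zero hsb_ne
  have hD : Matrix.diagonal (fun p : Fin (k + 1) × Fin m => xb p.1 p.2) *
      (Matrix.diagonal fun p : Fin (k + 1) × Fin m => sb p.1 p.2)⁻¹ =
      Matrix.diagonal fun p : Fin (k + 1) × Fin m => xb p.1 p.2 / sb p.1 p.2 := by
    rw [hS, diagonal_mul_diagonal]
    rfl
  have hb : (Matrix.diagonal fun p : Fin (k + 1) × Fin m => sb p.1 p.2)⁻¹ *ᵥ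
      (fun p : Fin (k + 1) × Fin m => g p.1 p.2) =
      fun p => ((Matrix.diagonal (sb p.1))⁻¹ *ᵥ g p.1) p.2 := by
    ext p
    rw [hS, inv_diagonal_of_ne_zero fun e => (hsb p.1 e).ne', mulVec_diagonal, mulVec_diagonal]
    rfl
  rw [hD, hb, commodityGram_inv_mulVec A hA (fun i e => div_pos (hxb i e) (hsb i e)) _ w hw v hv]
    at hres
  subst hres
  refine ⟨fun i e => ?_, fun e => ?_⟩
  · rw [commodityMatrix_mulVec_castSucc]
    simp only [commodityLift, Sum.elim_inl, Sum.elim_inr, Pi.sub_apply, Finset.sum_apply]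
    ring
  · rw [commodityMatrix_mulVec_last]
    simp [commodityLift, Finset.sum_apply]

/-- the blocks of the vector `𝒜 (𝒜ᵀ X̄ S̄⁻¹ 𝒜)⁻¹ 𝒜ᵀ S̄⁻¹ g` are
`w + A v_i − ∑_j D_j D_Σ⁻¹ A v_j` for `i = 1,…,k` and `w − ∑_j D_j D_Σ⁻¹ A v_j` for the
`(k+1)`-th block, where `w = D_Σ⁻¹ ∑_i diag(s̄_i)⁻¹ g_i` and
`(v₁,…,v_k) = E⁻¹` applied to the stacked vector with `i`-th block
`Aᵀ (diag(s̄_i)⁻¹ g_i − D_i w)`. -/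
theorem commodity_delta_s_blocks {m n k : ℕ} (hk : 1 ≤ k)
    (A : Matrix (Fin m) (Fin n) ℝ)
    (hA : ∀ y : Fin n → ℝ, A *ᵥ y = 0 → y = 0)
    (xb sb g : Fin (k + 1) → Fin m → ℝ)
    (hxb : ∀ i e, 0 < xb i e) (hsb : ∀ i e, 0 < sb i e)
    (w : Fin m → ℝ)
    (hw : w = (Matrix.diagonal fun e : Fin m => ∑ i, xb i e / sb i e)⁻¹ *ᵥ
        ∑ i, (Matrix.diagonal (sb i))⁻¹ *ᵥ g i)
    (v : Fin k × Fin n → ℝ)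
    (hv : v = (schurE k A (fun i e => xb i e / sb i e))⁻¹ *ᵥ
        (fun p : Fin k × Fin n =>
          (Aᵀ *ᵥ ((Matrix.diagonal (sb p.1.castSucc))⁻¹ *ᵥ g p.1.castSucc -
            Matrix.diagonal (fun e => xb p.1.castSucc e / sb p.1.castSucc e) *ᵥ w)) p.2))
    (res : Fin (k + 1) × Fin m → ℝ)
    (hres : res = commodityMatrix k A *ᵥ
        (((commodityMatrix k A)ᵀ *
            (Matrix.diagonal (fun p : Fin (k + 1) × Fin m => xb p.1 p.2) *
              (Matrix.diagonal (fun p : Fin (k + 1) × Fin m => sb p.1 p.2))⁻¹) *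
            commodityMatrix k A)⁻¹ *ᵥ
          ((commodityMatrix k A)ᵀ *ᵥ
            ((Matrix.diagonal (fun p : Fin (k + 1) × Fin m => sb p.1 p.2))⁻¹ *ᵥ
              fun p : Fin (k + 1) × Fin m => g p.1 p.2)))) :
    (∀ (i : Fin k) (e : Fin m),
        res (i.castSucc, e) =
          w e + (A *ᵥ fun vtx => v (i, vtx)) e -
            ∑ j : Fin k,
              ((Matrix.diagonal (fun e' => xb j.castSucc e' / sb j.castSucc e') *
                  (Matrix.diagonal fun e' : Fin m => ∑ i', xb i' e' / sb i' e')⁻¹ * A) *ᵥ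
                fun vtx => v (j, vtx)) e) ∧
    (∀ e : Fin m,
        res (Fin.last k, e) =
          w e -
            ∑ j : Fin k,
              ((Matrix.diagonal (fun e' => xb j.castSucc e' / sb j.castSucc e') *
                  (Matrix.diagonal fun e' : Fin m => ∑ i', xb i' e' / sb i' e')⁻¹ * A) *ᵥ
                fun vtx => v (j, vtx)) e) :=
  commodity_delta_s_blocks_general A hA xb sb g hxb hsb w hw v hv res hres
end

section
/- Let M ∈ ℝ^{N×p} be a real matrix, b ∈ ℝ^p, c ∈ ℝ^N, and t' ≤ t positive reals. Suppose (x, y, s) and (x', y', s') satisfy: x, s, x', s' ∈ ℝ^N are entrywise positive, Mᵀx = b, My + s = c, Mᵀx' = b, My' + s' = c, and entrywise x_i s_i ≈_{1/10} t and x'_i s'_i ≈_{1/10} t'. Then Σ_{i=1}^N (x'_i/x_i) + Σ_{i=1}^N (s'_i/s_i) ≤ 3N. -/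
open Matrix

/-- `a ≈_ε b` means `exp(−ε)·a ≤ b ≤ exp(ε)·a`. -/
def approx (ε a b : ℝ) : Prop := Real.exp (-ε) * a ≤ b ∧ b ≤ Real.exp ε * a

/-!
The differences `x - x'` and `s - s'` of two feasible primal-dual pairs lie in `ker Mᵀ` and
`range M` respectively, so they are orthogonal: `x·s' + x'·s = x·s + x'·s'`. Since
`x_i s_i ≥ e^{-ε} t`, each term `x'_i/x_i + s'_i/s_i = (x_i s'_i + x'_i s_i)/(x_i s_i)` is at most
`(e^ε/t)(x_i s'_i + x'_i s_i)`; summing and using orthogonality together with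
`x_i s_i + x'_i s'_i ≤ e^ε (t + t') ≤ 2 e^ε t` gives the bound `2 e^{2ε} N`, and `e^{1/5} ≤ 3/2`.
-/

theorem approx.le_exp_mul {ε a b : ℝ} (h : approx ε a b) : a ≤ Real.exp ε * b := by
  have h' := mul_le_mul_of_nonneg_left h.1 (Real.exp_pos ε).le
  rwa [← mul_assoc, ← Real.exp_add, add_neg_cancel, Real.exp_zero, one_mul] at h'

theorem exp_one_fifth_le : Real.exp (1 / 5) ≤ 3 / 2 :=
  (Real.exp_bound_div_one_sub_of_interval (by norm_num) (by norm_num)).trans (by norm_num)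

section Feasibility

variable {m n R : Type*} [Fintype m] [Fintype n] [CommRing R]

theorem dotProduct_sub_eq_zero_of_feasible {M : Matrix m n R} {b : n → R} {c : m → R}
    {x x' s s' : m → R} {y y' : n → R}
    (hprim : Mᵀ *ᵥ x = b) (hdual : M *ᵥ y + s = c)
    (hprim' : Mᵀ *ᵥ x' = b) (hdual' : M *ᵥ y' + s' = c) :
    (x - x') ⬝ᵥ (s - s') = 0 := by
  have hs : s - s' = M *ᵥ (y' - y) := by
    rw [mulVec_sub, eq_sub_of_add_eq hdual, eq_sub_of_add_eq hdual']
    abel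
  have hx : Mᵀ *ᵥ (x - x') = 0 := by rw [mulVec_sub, hprim, hprim', sub_self]
  rw [hs, dotProduct_mulVec, ← mulVec_transpose, hx, zero_dotProduct]

theorem dotProduct_cross_eq_of_feasible {M : Matrix m n R} {b : n → R} {c : m → R}
    {x x' s s' : m → R} {y y' : n → R}
    (hprim : Mᵀ *ᵥ x = b) (hdual : M *ᵥ y + s = c)
    (hprim' : Mᵀ *ᵥ x' = b) (hdual' : M *ᵥ y' + s' = c) :
    x ⬝ᵥ s' + x' ⬝ᵥ s = x ⬝ᵥ s + x' ⬝ᵥ s' := by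
  have h := dotProduct_sub_eq_zero_of_feasible hprim hdual hprim' hdual'
  simp only [sub_dotProduct, dotProduct_sub] at h
  linear_combination -h

end Feasibility

theorem div_add_div_le_of_le_mul {x x' s s' t K : ℝ} (hx : 0 < x) (hs : 0 < s)
    (hx' : 0 ≤ x') (hs' : 0 ≤ s') (ht : 0 < t) (hK : t ≤ K * (x * s)) :
    x' / x + s' / s ≤ K / t * (x * s' + x' * s) := by
  have hxs : 0 < x * s := mul_pos hx hs
  rw [div_add_div _ _ hx.ne' hs.ne', div_mul_eq_mul_div, div_le_div_iff₀ hxs ht]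
  have hnum : 0 ≤ x' * s + x * s' := by positivity
  nlinarith

theorem sum_div_add_sum_div_le_of_approx {ι : Type*} [Fintype ι] {ε t t' : ℝ}
    (ht : 0 < t) (htt : t' ≤ t) {x x' s s' : ι → ℝ}
    (hx : ∀ i, 0 < x i) (hs : ∀ i, 0 < s i) (hx' : ∀ i, 0 ≤ x' i) (hs' : ∀ i, 0 ≤ s' i)
    (hcross : x ⬝ᵥ s' + x' ⬝ᵥ s = x ⬝ᵥ s + x' ⬝ᵥ s')
    (hxs : ∀ i, approx ε (x i * s i) t) (hxs' : ∀ i, approx ε (x' i * s' i) t') :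
    (∑ i, x' i / x i) + (∑ i, s' i / s i) ≤ 2 * Real.exp (2 * ε) * Fintype.card ι := by
  set K := Real.exp ε
  have hK : 0 < K / t := div_pos (Real.exp_pos ε) ht
  have hdiag : ∀ i, x i * s i + x' i * s' i ≤ 2 * K * t := fun i => by
    nlinarith [(hxs i).le_exp_mul, (hxs' i).le_exp_mul, Real.exp_pos ε]
  have hdiag_sum : x ⬝ᵥ s + x' ⬝ᵥ s' ≤ Fintype.card ι • (2 * K * t) := by
    rw [dotProduct, dotProduct, ← Finset.sum_add_distrib, ← Finset.card_univ]
    exact Finset.sum_le_card_nsmul _ _ _ fun i _ => hdiag i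
  calc (∑ i, x' i / x i) + (∑ i, s' i / s i)
      = ∑ i, (x' i / x i + s' i / s i) := Finset.sum_add_distrib.symm
    _ ≤ ∑ i, K / t * (x i * s' i + x' i * s i) := Finset.sum_le_sum fun i _ =>
        div_add_div_le_of_le_mul (hx i) (hs i) (hx' i) (hs' i) ht (hxs i).2
    _ = K / t * (x ⬝ᵥ s + x' ⬝ᵥ s') := by
        rw [← hcross, ← Finset.mul_sum, dotProduct, dotProduct, ← Finset.sum_add_distrib]
    _ ≤ K / t * (Fintype.card ι • (2 * K * t)) := mul_le_mul_of_nonneg_left hdiag_sum hK.le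
    _ = 2 * Real.exp (2 * ε) * Fintype.card ι := by
        rw [nsmul_eq_mul, two_mul ε, Real.exp_add]
        field_simp
        ring

theorem primal_dual_ratio_bound_general {N p : ℕ}
    (M : Matrix (Fin N) (Fin p) ℝ) (b : Fin p → ℝ) (c : Fin N → ℝ)
    (t t' : ℝ) (ht : 0 < t) (htt : t' ≤ t)
    (x x' s s' : Fin N → ℝ) (y y' : Fin p → ℝ)
    (hx : ∀ i, 0 < x i) (hs : ∀ i, 0 < s i)
    (hx' : ∀ i, 0 < x' i) (hs' : ∀ i, 0 < s' i)
    (hprim : Mᵀ *ᵥ x = b) (hdual : M *ᵥ y + s = c)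
    (hprim' : Mᵀ *ᵥ x' = b) (hdual' : M *ᵥ y' + s' = c)
    (hxs : ∀ i, approx (1 / 10) (x i * s i) t)
    (hxs' : ∀ i, approx (1 / 10) (x' i * s' i) t') :
    (∑ i, x' i / x i) + (∑ i, s' i / s i) ≤ 3 * N := by
  have hcross := dotProduct_cross_eq_of_feasible hprim hdual hprim' hdual'
  calc (∑ i, x' i / x i) + (∑ i, s' i / s i)
      ≤ 2 * Real.exp (2 * (1 / 10)) * Fintype.card (Fin N) :=
        sum_div_add_sum_div_le_of_approx ht htt hx hs (fun i => (hx' i).le) (fun i => (hs' i).le)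
          hcross hxs hxs'
    _ ≤ 3 * N := by
        rw [Fintype.card_fin]
        gcongr
        norm_num
        linarith [exp_one_fifth_le]

/-- for feasible primal-dual pairs `(x, y, s)` and `(x', y', s')` of the LP
`min cᵀx s.t. Mᵀx = b, x ≥ 0`, with `x_i s_i ≈_{1/10} t`, `x'_i s'_i ≈_{1/10} t'` and
`t' ≤ t`, one has `∑ x'_i/x_i + ∑ s'_i/s_i ≤ 3N`. -/
theorem primal_dual_ratio_bound {N p : ℕ}
    (M : Matrix (Fin N) (Fin p) ℝ) (b : Fin p → ℝ) (c : Fin N → ℝ)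
    (t t' : ℝ) (ht' : 0 < t') (ht : 0 < t) (htt : t' ≤ t)
    (x x' s s' : Fin N → ℝ) (y y' : Fin p → ℝ)
    (hx : ∀ i, 0 < x i) (hs : ∀ i, 0 < s i)
    (hx' : ∀ i, 0 < x' i) (hs' : ∀ i, 0 < s' i)
    (hprim : Mᵀ *ᵥ x = b) (hdual : M *ᵥ y + s = c)
    (hprim' : Mᵀ *ᵥ x' = b) (hdual' : M *ᵥ y' + s' = c)
    (hxs : ∀ i, approx (1 / 10) (x i * s i) t)
    (hxs' : ∀ i, approx (1 / 10) (x' i * s' i) t') :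
    (∑ i, x' i / x i) + (∑ i, s' i / s i) ≤ 3 * N :=
  primal_dual_ratio_bound_general M b c t t' ht htt x x' s s' y y' hx hs hx' hs' hprim hdual hprim'
    hdual' hxs hxs'
end

section
/- Let M ∈ ℝ^{N×p} be a real matrix, b ∈ ℝ^p, c ∈ ℝ^N, u ∈ ℝ^N entrywise positive, and 0 < t ≤ t_init. Suppose (x_init, y_init, s_init) and (x, y, s) satisfy: x_init, s_init, x, s ∈ ℝ^N are entrywise positive, Mᵀx_init = b, My_init + s_init = c, Mᵀx = b, My + s = c, entrywise (x_init)_i (s_init)_i ≈_{1/16} t_init and x_i s_i ≈_{1/16} t, and x ≤ u entrywise. Then for every index i: t/(10 u_i) ≤ s_i ≤ 3N·(s_init)_i, and t/(4N·(s_init)_i) ≤ x_i ≤ u_i. -/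
/-!
Since `x - x_init` lies in the kernel of `Mᵀ` and `s - s_init` in the range of `M`, the two
differences are orthogonal, so `x ⬝ s_init + x_init ⬝ s = x ⬝ s + x_init ⬝ s_init`, and centrality
bounds the right side by `2 e^{1/16} N t_init`. Every summand `(x_init)_i s_i` of the left side is
therefore at most `2 e^{1/8} N (x_init)_i (s_init)_i`, which is the upper bound on `s`. The lower
bounds follow from `t ≤ e^{1/16} x_i s_i` together with `x ≤ u` and the upper bound on `s`.
-/

open Matrix

section Feasibility

variable {m n R : Type*} [Fintype m] [Fintype n]

theorem dotProduct_mulVec_eq_zero_of_transpose_mulVec_eq_zero [CommSemiring R]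
    {M : Matrix m n R} {v : m → R} (hv : Mᵀ *ᵥ v = 0) (z : n → R) : v ⬝ᵥ (M *ᵥ z) = 0 := by
  rw [dotProduct_mulVec, ← mulVec_transpose, hv, zero_dotProduct]

theorem primal_dual_sub_dotProduct_sub_eq_zero [CommRing R] {M : Matrix m n R} {b : n → R}
    {c : m → R} {x x' s s' : m → R} {y y' : n → R} (hx : Mᵀ *ᵥ x = b) (hx' : Mᵀ *ᵥ x' = b)
    (hs : M *ᵥ y + s = c) (hs' : M *ᵥ y' + s' = c) : (x - x') ⬝ᵥ (s - s') = 0 := by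
  have hs_sub : s - s' = M *ᵥ (y' - y) := by
    rw [mulVec_sub, eq_sub_of_add_eq hs, eq_sub_of_add_eq hs']
    abel
  rw [hs_sub]
  exact dotProduct_mulVec_eq_zero_of_transpose_mulVec_eq_zero
    (by rw [mulVec_sub, hx, hx', sub_self]) _

theorem primal_dual_cross_dotProduct_eq [CommRing R] {M : Matrix m n R} {b : n → R}
    {c : m → R} {x x' s s' : m → R} {y y' : n → R} (hx : Mᵀ *ᵥ x = b) (hx' : Mᵀ *ᵥ x' = b)
    (hs : M *ᵥ y + s = c) (hs' : M *ᵥ y' + s' = c) :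
    x ⬝ᵥ s' + x' ⬝ᵥ s = x ⬝ᵥ s + x' ⬝ᵥ s' := by
  have h := primal_dual_sub_dotProduct_sub_eq_zero hx hx' hs hs'
  simp only [sub_dotProduct, dotProduct_sub] at h
  linear_combination -h

end Feasibility

theorem div_le_of_approx_mul {ε a b B C t : ℝ} (h : approx ε (a * b) t) (ha : 0 ≤ a)
    (hbB : b ≤ B) (hC : Real.exp ε ≤ C) (hCB : 0 < C * B) : t / (C * B) ≤ a := by
  have hC0 : 0 ≤ C := (Real.exp_pos ε).le.trans hC
  have hB : 0 ≤ B := (pos_of_mul_pos_right hCB hC0).le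
  rw [div_le_iff₀ hCB]
  calc t ≤ Real.exp ε * (a * b) := h.2
    _ ≤ Real.exp ε * (a * B) := by gcongr
    _ ≤ C * (a * B) := by gcongr
    _ = a * (C * B) := by ring

section Centrality

variable {ι : Type*} [Fintype ι] {ε t t' : ℝ} {x x' s s' : ι → ℝ}

theorem dotProduct_le_of_approx (h : ∀ j, approx ε (x j * s j) t) :
    x ⬝ᵥ s ≤ Fintype.card ι * (Real.exp ε * t) := by
  rw [← nsmul_eq_mul]
  exact Finset.sum_le_card_nsmul _ _ _ fun j _ ↦ (h j).le_exp_mul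

theorem slack_le_of_cross_dotProduct_eq (hcross : x ⬝ᵥ s' + x' ⬝ᵥ s = x ⬝ᵥ s + x' ⬝ᵥ s')
    (hx : 0 ≤ x) (hx' : 0 ≤ x') (hs : 0 ≤ s) (hs' : 0 ≤ s') (htt' : t ≤ t')
    (hxs : ∀ j, approx ε (x j * s j) t) (hxs' : ∀ j, approx ε (x' j * s' j) t')
    (i : ι) (hx'i : 0 < x' i) :
    s i ≤ 2 * Real.exp (2 * ε) * Fintype.card ι * s' i := by
  have hterm : x' i * s i ≤ x' ⬝ᵥ s :=
    Finset.single_le_sum (f := fun j ↦ x' j * s j) (fun j _ ↦ mul_nonneg (hx' j) (hs j))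
      (Finset.mem_univ i)
  have hsum : x ⬝ᵥ s + x' ⬝ᵥ s' ≤ 2 * Real.exp ε * Fintype.card ι * t' := by
    have := dotProduct_le_of_approx hxs
    have := dotProduct_le_of_approx hxs'
    have : Real.exp ε * t ≤ Real.exp ε * t' := by gcongr
    nlinarith [(Nat.cast_nonneg (Fintype.card ι) : (0 : ℝ) ≤ _)]
  refine le_of_mul_le_mul_left ?_ hx'i
  calc x' i * s i ≤ x ⬝ᵥ s' + x' ⬝ᵥ s :=
        le_add_of_nonneg_of_le (dotProduct_nonneg_of_nonneg hx hs') hterm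
    _ ≤ 2 * Real.exp ε * Fintype.card ι * t' := hcross ▸ hsum
    _ ≤ 2 * Real.exp ε * Fintype.card ι * (Real.exp ε * (x' i * s' i)) := by
        gcongr; exact (hxs' i).2
    _ = x' i * (2 * Real.exp (2 * ε) * Fintype.card ι * s' i) := by
        rw [two_mul ε, Real.exp_add]; ring

end Centrality

theorem ipm_primal_dual_entry_bounds_general {N p : ℕ}
    (M : Matrix (Fin N) (Fin p) ℝ) (b : Fin p → ℝ) (c : Fin N → ℝ)
    (u : Fin N → ℝ)
    (t tinit : ℝ) (httinit : t ≤ tinit)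
    (xinit x sinit s : Fin N → ℝ) (yinit y : Fin p → ℝ)
    (hxinit : ∀ i, 0 < xinit i) (hsinit : ∀ i, 0 < sinit i)
    (hx : ∀ i, 0 < x i) (hs : ∀ i, 0 < s i)
    (hpriminit : Mᵀ *ᵥ xinit = b) (hdualinit : M *ᵥ yinit + sinit = c)
    (hprim : Mᵀ *ᵥ x = b) (hdual : M *ᵥ y + s = c)
    (hxsinit : ∀ i, approx (1 / 16) (xinit i * sinit i) tinit)
    (hxs : ∀ i, approx (1 / 16) (x i * s i) t)
    (hxu : ∀ i, x i ≤ u i) :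
    ∀ i, t / (10 * u i) ≤ s i ∧ s i ≤ 3 * N * sinit i ∧
      t / (4 * N * sinit i) ≤ x i ∧ x i ≤ u i := by
  have hexp : Real.exp (1 / 16) ≤ 4 / 3 :=
    (Real.exp_bound_div_one_sub_of_interval (by norm_num) (by norm_num)).trans (by norm_num)
  have hexp2 : 2 * Real.exp (2 * (1 / 16)) ≤ 3 := by
    have := Real.exp_bound_div_one_sub_of_interval (x := 2 * (1 / 16)) (by norm_num) (by norm_num)
    linarith [show (1 : ℝ) / (1 - 2 * (1 / 16)) ≤ 3 / 2 by norm_num]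
  intro i
  have hN : (0 : ℝ) < N := Nat.cast_pos.mpr i.pos
  have hs_le : s i ≤ 3 * N * sinit i := by
    have := slack_le_of_cross_dotProduct_eq
      (primal_dual_cross_dotProduct_eq hprim hpriminit hdual hdualinit)
      (fun j ↦ (hx j).le) (fun j ↦ (hxinit j).le) (fun j ↦ (hs j).le) (fun j ↦ (hsinit j).le)
      httinit hxs hxsinit i (hxinit i)
    rw [Fintype.card_fin] at this
    exact this.trans (by gcongr; exact (hsinit i).le)
  refine ⟨?_, hs_le, ?_, hxu i⟩
  · exact div_le_of_approx_mul (mul_comm (x i) (s i) ▸ hxs i) (hs i).le (hxu i)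
      (hexp.trans (by norm_num)) (mul_pos (by norm_num) ((hx i).trans_le (hxu i)))
  · have := div_le_of_approx_mul (hxs i) (hx i).le hs_le hexp
      (mul_pos (by norm_num) (mul_pos (mul_pos (by norm_num) hN) (hsinit i)))
    rwa [show (4 : ℝ) / 3 * (3 * N * sinit i) = 4 * N * sinit i by ring] at this

/-- bounds on the primal iterate `x` and dual slack `s` throughout the IPM.
For feasible pairs `(x_init, y_init, s_init)` with `(x_init)_i (s_init)_i ≈_{1/16} t_init`
and `(x, y, s)` with `x_i s_i ≈_{1/16} t`, `0 < t ≤ t_init` and `x ≤ u` entrywise, every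
index `i` satisfies `t/(10 u_i) ≤ s_i ≤ 3N (s_init)_i` and `t/(4N (s_init)_i) ≤ x_i ≤ u_i`. -/
theorem ipm_primal_dual_entry_bounds {N p : ℕ}
    (M : Matrix (Fin N) (Fin p) ℝ) (b : Fin p → ℝ) (c : Fin N → ℝ)
    (u : Fin N → ℝ) (hu : ∀ i, 0 < u i)
    (t tinit : ℝ) (ht : 0 < t) (httinit : t ≤ tinit)
    (xinit x sinit s : Fin N → ℝ) (yinit y : Fin p → ℝ)
    (hxinit : ∀ i, 0 < xinit i) (hsinit : ∀ i, 0 < sinit i)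
    (hx : ∀ i, 0 < x i) (hs : ∀ i, 0 < s i)
    (hpriminit : Mᵀ *ᵥ xinit = b) (hdualinit : M *ᵥ yinit + sinit = c)
    (hprim : Mᵀ *ᵥ x = b) (hdual : M *ᵥ y + s = c)
    (hxsinit : ∀ i, approx (1 / 16) (xinit i * sinit i) tinit)
    (hxs : ∀ i, approx (1 / 16) (x i * s i) t)
    (hxu : ∀ i, x i ≤ u i) :
    ∀ i, t / (10 * u i) ≤ s i ∧ s i ≤ 3 * N * sinit i ∧
      t / (4 * N * sinit i) ≤ x i ∧ x i ≤ u i :=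
  ipm_primal_dual_entry_bounds_general M b c u t tinit httinit xinit x sinit s yinit y hxinit hsinit
    hx hs hpriminit hdualinit hprim hdual hxsinit hxs hxu
end

section
/- Let A ∈ ℝ^{m×n}, let K ≥ 1, let v₁,…,v_K ∈ ℝ^n, w ∈ ℝ^m, and let d₁,…,d_K ∈ ℝ^m be entrywise positive vectors with d_Σ = Σ_{i=1}^K d_i (entrywise). Writing D_i = diag(d_i) and D_Σ = diag(d_Σ), it holds that Σ_{i=1}^K Σ_{j=1}^K ‖D_i^{1/2} D_j D_Σ⁻¹ A (v_i − v_j)‖₂² ≤ 4 · Σ_{i=1}^K ‖D_i^{1/2} (w + Σ_{j=1}^K D_j D_Σ⁻¹ A (v_i − v_j))‖₂². -/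
/-!
Everything happens coordinatewise, so fix a coordinate and write `p j = d j / ∑ l, d l` and
`q i = ∑ j, p j * (u i - u j) = u i - ū`, with `ū` the `d`-weighted mean of `u`.
Since `∑ i, d i * q i = 0`, shifting by `w` can only increase `∑ i, d i * q i ^ 2`, which bounds
the right-hand side from below by `4 ∑ i, d i * q i ^ 2`. On the left, `p j ≤ 1` and
`(u i - u j) ^ 2 ≤ 2 (u i - ū) ^ 2 + 2 (u j - ū) ^ 2` bound it by the same quantity.
-/

open Matrix Finset

section WeightedPairwise

variable {ι : Type*} [Fintype ι] (d u : ι → ℝ)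

lemma sum_sum_mul_mul_sub_sq_le (hd : ∀ i, 0 ≤ d i) (c : ℝ) :
    ∑ i, ∑ j, d i * d j * (u i - u j) ^ 2 ≤ 4 * (∑ i, d i) * ∑ i, d i * (u i - c) ^ 2 := by
  calc ∑ i, ∑ j, d i * d j * (u i - u j) ^ 2
      ≤ ∑ i, ∑ j, (2 * d j * (d i * (u i - c) ^ 2) + 2 * d i * (d j * (u j - c) ^ 2)) := by
        refine sum_le_sum fun i _ => sum_le_sum fun j _ => ?_
        have h : (u i - u j) ^ 2 ≤ 2 * (u i - c) ^ 2 + 2 * (u j - c) ^ 2 := by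
          nlinarith [sq_nonneg (u i + u j - 2 * c)]
        linarith [mul_le_mul_of_nonneg_left h (mul_nonneg (hd i) (hd j))]
    _ = 4 * (∑ i, d i) * ∑ i, d i * (u i - c) ^ 2 := by
        simp only [sum_add_distrib, ← sum_mul, ← mul_sum]
        ring

lemma sum_sum_mul_div_sq_mul_sub_sq_le (hd : ∀ i, 0 ≤ d i) (c : ℝ) :
    ∑ i, ∑ j, d i * (d j / ∑ l, d l) ^ 2 * (u i - u j) ^ 2 ≤
      4 * ∑ i, d i * (u i - c) ^ 2 := by
  set S := ∑ l, d l
  have hS : 0 ≤ S := sum_nonneg fun l _ => hd l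
  have hp : ∀ j, 0 ≤ d j / S ∧ d j / S ≤ 1 := fun j =>
    ⟨div_nonneg (hd j) hS, div_le_one_of_le₀ (single_le_sum (fun l _ => hd l) (mem_univ j)) hS⟩
  calc ∑ i, ∑ j, d i * (d j / S) ^ 2 * (u i - u j) ^ 2
      ≤ ∑ i, ∑ j, d i * (d j / S) * (u i - u j) ^ 2 := by
        gcongr with i _ j _
        · exact hd i
        · exact pow_le_of_le_one (hp j).1 (hp j).2 two_ne_zero
    _ = S⁻¹ * ∑ i, ∑ j, d i * d j * (u i - u j) ^ 2 := by
        simp only [mul_sum]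
        exact sum_congr rfl fun i _ => sum_congr rfl fun j _ => by ring
    _ ≤ S⁻¹ * (4 * S * ∑ i, d i * (u i - c) ^ 2) := by
        gcongr
        exact sum_sum_mul_mul_sub_sq_le d u hd c
    _ ≤ 4 * ∑ i, d i * (u i - c) ^ 2 := by
        have hT : 0 ≤ ∑ i, d i * (u i - c) ^ 2 :=
          sum_nonneg fun i _ => mul_nonneg (hd i) (sq_nonneg _)
        calc S⁻¹ * (4 * S * ∑ i, d i * (u i - c) ^ 2)
            = S⁻¹ * S * (4 * ∑ i, d i * (u i - c) ^ 2) := by ring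
          _ ≤ 4 * ∑ i, d i * (u i - c) ^ 2 :=
            mul_le_of_le_one_left (mul_nonneg zero_le_four hT) (inv_mul_le_one_of_le₀ le_rfl hS)

lemma sum_div_sum_mul_sub (hS : ∑ l, d l ≠ 0) (i : ι) :
    ∑ j, d j / (∑ l, d l) * (u i - u j) = u i - ∑ j, d j / (∑ l, d l) * u j := by
  simp only [mul_sub, sum_sub_distrib, ← sum_mul, ← sum_div, div_self hS, one_mul]

lemma sum_mul_sum_div_mul_sub_eq_zero :
    ∑ i, d i * ∑ j, d j / (∑ l, d l) * (u i - u j) = 0 := by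
  have h : ∑ i, ∑ j, d i * (d j / (∑ l, d l) * (u i - u j)) =
      -∑ j, ∑ i, d j * (d i / (∑ l, d l) * (u j - u i)) := by
    simp only [← sum_neg_distrib]
    rw [sum_comm]
    exact sum_congr rfl fun i _ => sum_congr rfl fun j _ => by ring
  simp only [mul_sum]
  linarith

lemma sum_mul_sq_le_sum_mul_add_sq {q : ι → ℝ} (hd : ∀ i, 0 ≤ d i)
    (hq : ∑ i, d i * q i = 0) (w : ℝ) :
    ∑ i, d i * q i ^ 2 ≤ ∑ i, d i * (w + q i) ^ 2 := by
  have h : ∑ i, d i * (w + q i) ^ 2 =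
      ∑ i, d i * q i ^ 2 + 2 * w * ∑ i, d i * q i + w ^ 2 * ∑ i, d i := by
    simp only [mul_sum, ← sum_add_distrib]
    exact sum_congr rfl fun i _ => by ring
  rw [h, hq, mul_zero, add_zero]
  exact le_add_of_nonneg_right (mul_nonneg (sq_nonneg w) (sum_nonneg fun i _ => hd i))

lemma sum_sum_mul_div_sq_mul_sub_sq_le_four_mul (hd : ∀ i, 0 ≤ d i) (w : ℝ) :
    ∑ i, ∑ j, d i * (d j / ∑ l, d l) ^ 2 * (u i - u j) ^ 2 ≤
      4 * ∑ i, d i * (w + ∑ j, d j / (∑ l, d l) * (u i - u j)) ^ 2 := by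
  by_cases hS : ∑ l, d l = 0
  · simp only [hS, div_zero, zero_pow two_ne_zero, zero_mul, mul_zero, sum_const_zero]
    exact mul_nonneg zero_le_four (sum_nonneg fun i _ => mul_nonneg (hd i) (sq_nonneg _))
  calc ∑ i, ∑ j, d i * (d j / ∑ l, d l) ^ 2 * (u i - u j) ^ 2
      ≤ 4 * ∑ i, d i * (∑ j, d j / (∑ l, d l) * (u i - u j)) ^ 2 := by
        simp only [sum_div_sum_mul_sub d u hS]
        exact sum_sum_mul_div_sq_mul_sub_sq_le d u hd _
    _ ≤ 4 * ∑ i, d i * (w + ∑ j, d j / (∑ l, d l) * (u i - u j)) ^ 2 := by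
        gcongr 4 * ?_
        exact sum_mul_sq_le_sum_mul_add_sq d hd (sum_mul_sum_div_mul_sub_eq_zero d u) w

end WeightedPairwise

theorem commodity_norm_bound_general {m n K : ℕ}
    (A : Matrix (Fin m) (Fin n) ℝ)
    (v : Fin K → Fin n → ℝ) (w : Fin m → ℝ)
    (d : Fin K → Fin m → ℝ) (hd : ∀ i e, 0 < d i e) :
    ∑ i, ∑ j, ∑ e,
        d i e * (d j e / (∑ l, d l e)) ^ 2 * ((A *ᵥ (v i - v j)) e) ^ 2 ≤
      4 * ∑ i, ∑ e,
        d i e * (w e + ∑ j, (d j e / (∑ l, d l e)) * (A *ᵥ (v i - v j)) e) ^ 2 := by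
  calc ∑ i, ∑ j, ∑ e, d i e * (d j e / (∑ l, d l e)) ^ 2 * ((A *ᵥ (v i - v j)) e) ^ 2
      = ∑ e, ∑ i, ∑ j, d i e * (d j e / (∑ l, d l e)) ^ 2 * ((A *ᵥ (v i - v j)) e) ^ 2 :=
        (sum_congr rfl fun _ _ => sum_comm).trans sum_comm
    _ ≤ ∑ e, 4 * ∑ i, d i e * (w e + ∑ j, (d j e / (∑ l, d l e)) * (A *ᵥ (v i - v j)) e) ^ 2 :=
        sum_le_sum fun e _ => by
          simpa only [mulVec_sub, Pi.sub_apply] using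
            sum_sum_mul_div_sq_mul_sub_sq_le_four_mul (d · e) (fun i => (A *ᵥ v i) e)
              (fun i => (hd i e).le) (w e)
    _ = _ := by rw [← mul_sum, sum_comm]

/-- the multi-commodity norm bound. For `A ∈ ℝ^{m×n}`, vectors
`v₁,…,v_K ∈ ℝ^n`, `w ∈ ℝ^m`, entrywise positive `d₁,…,d_K ∈ ℝ^m` with
`d_Σ = ∑ d_i` (entrywise):
`∑_{i,j} ‖D_i^{1/2} D_j D_Σ⁻¹ A (v_i − v_j)‖₂²
  ≤ 4 ∑_i ‖D_i^{1/2} (w + ∑_j D_j D_Σ⁻¹ A (v_i − v_j))‖₂²`,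
stated coordinatewise as sums of squares. -/
theorem commodity_norm_bound {m n K : ℕ} (hK : 1 ≤ K)
    (A : Matrix (Fin m) (Fin n) ℝ)
    (v : Fin K → Fin n → ℝ) (w : Fin m → ℝ)
    (d : Fin K → Fin m → ℝ) (hd : ∀ i e, 0 < d i e) :
    ∑ i, ∑ j, ∑ e,
        d i e * (d j e / (∑ l, d l e)) ^ 2 * ((A *ᵥ (v i - v j)) e) ^ 2 ≤
      4 * ∑ i, ∑ e,
        d i e * (w e + ∑ j, (d j e / (∑ l, d l e)) * (A *ᵥ (v i - v j)) e) ^ 2 :=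
  commodity_norm_bound_general A v w d hd
end

section
/- Let n ≥ 1, let ε ∈ (0, 0.1], let U, Z > 0 and μ > 0, and let x, s, ŝ ∈ ℝ^n with 0 < x_i ≤ U for all i, with x_i s_i ≈_ε μ for all i, with |ŝ_i − s_i| ≤ Z for all i, and with μ ≥ 10·U·Z/ε. Then ŝ is entrywise positive and x_i ŝ_i ≈_{2ε} μ for all i. -/
open Real

theorem approx_iff_mem_Icc {ε a μ : ℝ} :
    approx ε a μ ↔ a ∈ Set.Icc (μ * exp (-ε)) (μ * exp ε) := by
  rw [approx, Set.mem_Icc, exp_neg, inv_mul_le_iff₀ (exp_pos ε), ← div_eq_mul_inv,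
    div_le_iff₀ (exp_pos ε), and_comm, mul_comm a, mul_comm μ]

theorem approx.pos {ε a μ : ℝ} (h : approx ε a μ) (hμ : 0 < μ) : 0 < a :=
  (mul_pos hμ (exp_pos _)).trans_le (approx_iff_mem_Icc.mp h).1

/-- The upper margin `exp ε' - exp ε` is `exp (ε + ε')` times the lower margin
`exp (-ε) - exp (-ε')`, hence at least as large. -/
theorem approx_of_abs_sub_le {ε ε' a b μ : ℝ} (hε : 0 ≤ ε) (hεε' : ε ≤ ε') (hμ : 0 ≤ μ)
    (ha : approx ε a μ) (hab : |b - a| ≤ (exp (-ε) - exp (-ε')) * μ) : approx ε' b μ := by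
  obtain ⟨hlow, hhigh⟩ := approx_iff_mem_Icc.mp ha
  obtain ⟨hba, hab'⟩ := abs_le.mp hab
  have hmargin : exp (-ε) - exp (-ε') ≤ exp ε' - exp ε := by
    have hfactor : exp ε' - exp ε = exp (ε + ε') * (exp (-ε) - exp (-ε')) := by
      simp only [mul_sub, ← exp_add]
      ring_nf
    have hnonneg : 0 ≤ exp (-ε) - exp (-ε') := sub_nonneg.mpr (exp_le_exp.mpr (by linarith))
    rw [hfactor]
    exact le_mul_of_one_le_left hnonneg (one_le_exp (by linarith))
  have := mul_le_mul_of_nonneg_right hmargin hμ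
  exact approx_iff_mem_Icc.mpr ⟨by linarith, by linarith⟩

theorem mul_one_sub_two_mul_le_exp_neg_sub_exp_neg_two_mul {ε : ℝ} (hε : 0 ≤ ε) :
    ε * (1 - 2 * ε) ≤ exp (-ε) - exp (-(2 * ε)) := by
  have hsplit : exp (-ε) = exp (-(2 * ε)) * exp ε := by rw [← exp_add]; ring_nf
  rw [hsplit]
  nlinarith [add_one_le_exp ε, add_one_le_exp (-(2 * ε)), exp_pos (-(2 * ε)),
    mul_nonneg hε (by linarith [add_one_le_exp (-(2 * ε))] : 0 ≤ exp (-(2 * ε)) - 1 + 2 * ε)]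

theorem slack_perturbation_centered_general {n : ℕ}
    (ε : ℝ) (hε0 : 0 < ε) (hε1 : ε ≤ 0.1)
    (U Z μ : ℝ) (hμ : 0 < μ)
    (x s shat : Fin n → ℝ)
    (hx0 : ∀ i, 0 < x i) (hxU : ∀ i, x i ≤ U)
    (hxs : ∀ i, approx ε (x i * s i) μ)
    (hperturb : ∀ i, |shat i - s i| ≤ Z)
    (hμbig : 10 * U * Z / ε ≤ μ) :
    (∀ i, 0 < shat i) ∧ ∀ i, approx (2 * ε) (x i * shat i) μ := by
  have hUZ : U * Z ≤ ε / 10 * μ := by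
    rw [div_le_iff₀ hε0] at hμbig
    linarith
  have hmargin : ε / 10 ≤ exp (-ε) - exp (-(2 * ε)) :=
    le_trans (by nlinarith) (mul_one_sub_two_mul_le_exp_neg_sub_exp_neg_two_mul hε0.le)
  have hcentered : ∀ i, approx (2 * ε) (x i * shat i) μ := fun i =>
    approx_of_abs_sub_le hε0.le (by linarith) hμ.le (hxs i) <| calc
      |x i * shat i - x i * s i| = x i * |shat i - s i| := by
        rw [← mul_sub, abs_mul, abs_of_pos (hx0 i)]
      _ ≤ U * Z := mul_le_mul (hxU i) (hperturb i) (abs_nonneg _) ((hx0 i).le.trans (hxU i))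
      _ ≤ ε / 10 * μ := hUZ
      _ ≤ (exp (-ε) - exp (-(2 * ε))) * μ := mul_le_mul_of_nonneg_right hmargin hμ.le
  exact ⟨fun i => pos_of_mul_pos_right ((hcentered i).pos hμ) (hx0 i).le, hcentered⟩

/-- centrality is preserved under a bounded perturbation of the slack.
If `0 < x_i ≤ U`, `x_i s_i ≈_ε μ`, `|ŝ_i − s_i| ≤ Z` for all `i`, and `μ ≥ 10·U·Z/ε`,
then `ŝ` is entrywise positive and `x_i ŝ_i ≈_{2ε} μ` for all `i`. -/
theorem slack_perturbation_centered {n : ℕ} (hn : 1 ≤ n)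
    (ε : ℝ) (hε0 : 0 < ε) (hε1 : ε ≤ 0.1)
    (U Z μ : ℝ) (hU : 0 < U) (hZ : 0 < Z) (hμ : 0 < μ)
    (x s shat : Fin n → ℝ)
    (hx0 : ∀ i, 0 < x i) (hxU : ∀ i, x i ≤ U)
    (hxs : ∀ i, approx ε (x i * s i) μ)
    (hperturb : ∀ i, |shat i - s i| ≤ Z)
    (hμbig : 10 * U * Z / ε ≤ μ) :
    (∀ i, 0 < shat i) ∧ ∀ i, approx (2 * ε) (x i * shat i) μ :=
  slack_perturbation_centered_general ε hε0 hε1 U Z μ hμ x s shat hx0 hxU hxs hperturb hμbig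
end
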